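/- arXiv:2201.09321 — 2 statements merged into one kernel-verified Lean document; each statement's English description precedes it below -/
import Mathlib

section
/- Let φ(u) be a monic polynomial over ℂ𝔷ₙ with a zero w such that φ(u) = (u − w)g(u) with C(g(Cw)) = 0 (i.e., Cw is a multiple zero of the induced complex polynomial). Then for every nonzero scalar a ∈ ℂ, the element w + a·ζ_{[n]} is also a zero of φ; in particular φ has infinitely many zeros v with Cv = Cw. -/
open MvPolynomial

/-- The ideal generated by the squares of the generators. -/
noncomputable def zeonIdeal (n : ℕ) : Ideal (MvPolynomial (Fin n) ℂ) :=
  Ideal.span (Set.range fun i : Fin n => (X i : MvPolynomial (Fin n) ℂ) ^ 2)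

/-- The `n`-particle complex zeon algebra `ℂ𝔷ₙ`. -/
abbrev CZ (n : ℕ) := MvPolynomial (Fin n) ℂ ⧸ zeonIdeal n

/-- The generators `ζᵢ`. -/
noncomputable def zeta (n : ℕ) (i : Fin n) : CZ n :=
  Ideal.Quotient.mk (zeonIdeal n) (X i)

/-- The top blade `ζ_{[n]} = ζ₁⋯ζₙ`. -/
noncomputable def zeonTop (n : ℕ) : CZ n :=
  Ideal.Quotient.mk (zeonIdeal n) (∏ i : Fin n, X i)

/-- The scalar (grade-zero) part `Cu` of a zeon, as a ℂ-algebra homomorphism. -/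
noncomputable def zeonScalar (n : ℕ) : CZ n →ₐ[ℂ] ℂ :=
  Ideal.Quotient.liftₐ (zeonIdeal n) (aeval fun _ : Fin n => (0 : ℂ)) (by
    intro a ha
    have h : zeonIdeal n ≤ RingHom.ker (aeval (R := ℂ) fun _ : Fin n => (0 : ℂ)).toRingHom := by
      rw [zeonIdeal, Ideal.span_le]
      rintro _ ⟨i, rfl⟩
      simp [RingHom.mem_ker]
    exact h ha)

/-- The dual (nilpotent) part `Du = u - Cu` of a zeon. -/
noncomputable def zeonDual {n : ℕ} (u : CZ n) : CZ n :=
  u - algebraMap ℂ (CZ n) (zeonScalar n u)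

/-- Coefficientwise complex conjugation on the zeon algebra. -/
noncomputable def zeonConj (n : ℕ) : CZ n →+* CZ n :=
  Ideal.Quotient.lift (zeonIdeal n)
    ((Ideal.Quotient.mk (zeonIdeal n)).comp
      (MvPolynomial.map (starRingEnd ℂ) : MvPolynomial (Fin n) ℂ →+* MvPolynomial (Fin n) ℂ))
    (by
      intro a ha
      simp only [RingHom.comp_apply]
      rw [Ideal.Quotient.eq_zero_iff_mem]
      refine Submodule.span_induction ?_ ?_ ?_ ?_ ha
      · rintro x ⟨i, rfl⟩
        simp only [map_pow, MvPolynomial.map_X]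
        exact Ideal.subset_span ⟨i, rfl⟩
      · simp
      · intro x y _ _ hx hy
        rw [map_add]; exact Ideal.add_mem _ hx hy
      · intro a x _ hx
        rw [smul_eq_mul, map_mul]; exact Ideal.mul_mem_left _ _ hx)

/-- The zeon inner product `⟨x,y⟩ = Σ conj(yₗ) xₗ` on `(ℂ𝔷ₙ)^m`. -/
noncomputable def zinner {n m : ℕ} (x y : Fin m → CZ n) : CZ n :=
  ∑ ℓ : Fin m, zeonConj n (y ℓ) * x ℓ

lemma zeon_sqfree_coeff {n : ℕ} {p : MvPolynomial (Fin n) ℂ} (hp : p ∈ zeonIdeal n) :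
    ∀ d : (Fin n) →₀ ℕ, (∀ i, d i ≤ 1) → coeff d p = 0 := by
  refine Submodule.span_induction ?_ ?_ ?_ ?_ hp
  · rintro x ⟨i, rfl⟩ d hd
    show coeff d (X i ^ 2) = 0
    rw [X_pow_eq_monomial, coeff_monomial]
    have : d ≠ Finsupp.single i 2 := by
      intro h
      have := hd i
      simp [h] at this
    simp [this.symm]
  · simp
  · intro x y _ _ hx hy d hd
    simp [hx d hd, hy d hd]
  · intro q x _ hx d hd
    rw [smul_eq_mul, coeff_mul]
    refine Finset.sum_eq_zero fun ab hab => ?_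
    rw [Finset.HasAntidiagonal.mem_antidiagonal] at hab
    have : coeff ab.2 x = 0 := hx ab.2 (fun i => by
      have : ab.1 i + ab.2 i = d i := by rw [← Finsupp.add_apply, hab]
      have := hd i; omega)
    simp [this]

lemma prod_X_eq_monomial' {n : ℕ} :
    (∏ i : Fin n, X i : MvPolynomial (Fin n) ℂ) = monomial (∑ i : Fin n, Finsupp.single i 1) 1 := by
  rw [monomial_eq]
  simp [Finsupp.prod_pow, Finsupp.finset_sum_apply, Finsupp.single_apply]

lemma zeonTop_ne_zero (n : ℕ) : zeonTop n ≠ 0 := by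
  intro h
  rw [zeonTop, Ideal.Quotient.eq_zero_iff_mem] at h
  have := zeon_sqfree_coeff h (∑ i : Fin n, Finsupp.single i 1) (fun i => by
    simp [Finsupp.finset_sum_apply, Finsupp.single_apply])
  rw [prod_X_eq_monomial', coeff_monomial] at this
  simp at this

lemma zeonScalar_mk {n : ℕ} (p : MvPolynomial (Fin n) ℂ) :
    zeonScalar n (Ideal.Quotient.mk (zeonIdeal n) p) = constantCoeff p := by
  change (aeval fun _ : Fin n => (0 : ℂ)) p = constantCoeff p
  simp

lemma zeonTop_mul_nilpotent {n : ℕ} (u : CZ n) (hu : zeonScalar n u = 0) :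
    zeonTop n * u = 0 := by
  obtain ⟨p, rfl⟩ := Ideal.Quotient.mk_surjective u
  rw [zeonScalar_mk] at hu
  have hp : p ∈ Ideal.span (Set.range (X : Fin n → MvPolynomial (Fin n) ℂ)) := by
    rw [← Set.image_univ, mem_ideal_span_X_image]
    intro m hm
    by_contra hc
    push_neg at hc
    have : m = 0 := Finsupp.ext fun i => by simpa using hc i trivial
    subst this
    exact mem_support_iff.mp hm hu
  rw [zeonTop, ← map_mul, Ideal.Quotient.eq_zero_iff_mem]
  clear hu
  induction hp using Submodule.span_induction with
  | mem x hx =>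
    obtain ⟨j, rfl⟩ := hx
    have heq : (∏ i : Fin n, X i) * X j
        = (∏ i ∈ Finset.univ.erase j, (X i : MvPolynomial (Fin n) ℂ)) * X j ^ 2 := by
      rw [← Finset.mul_prod_erase Finset.univ _ (Finset.mem_univ j)]; ring
    rw [heq]
    exact Ideal.mul_mem_left _ _ (Ideal.subset_span ⟨j, rfl⟩)
  | zero => simp
  | add x y _ _ hx hy => rw [mul_add]; exact Ideal.add_mem _ hx hy
  | smul q x _ hx =>
    rw [smul_eq_mul, mul_comm q x, ← mul_assoc]
    exact Ideal.mul_mem_right _ _ hx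

lemma zeonScalar_zeonTop {n : ℕ} (hn : 0 < n) : zeonScalar n (zeonTop n) = 0 := by
  rw [zeonTop, zeonScalar_mk, prod_X_eq_monomial']
  rw [constantCoeff_monomial]
  have : (∑ i : Fin n, Finsupp.single i 1) ≠ 0 := by
    intro h
    have := DFunLike.congr_fun h ⟨0, hn⟩
    simp [Finsupp.finset_sum_apply, Finsupp.single_apply] at this
  simp [this]

lemma CZ_nontrivial (n : ℕ) : Nontrivial (CZ n) := by
  refine ⟨1, 0, fun h => ?_⟩
  rw [← map_one (Ideal.Quotient.mk (zeonIdeal n)), Ideal.Quotient.eq_zero_iff_mem] at h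
  have := zeon_sqfree_coeff h 0 (fun i => by simp)
  simp at this

set_option maxHeartbeats 1000000 in
/-- If `w` is a zeon zero of the monic polynomial `φ` whose scalar part is a multiple zero
of the induced complex polynomial, then `w + a·ζ_{[n]}` is a zero of `φ` for every nonzero
scalar `a`; in particular `φ` has infinitely many zeros `v` with `Cv = Cw`. -/
theorem zeon_infinitely_many_zeros (n : ℕ) (hn : 0 < n)
    (φ g : Polynomial (CZ n)) (hφ : φ.Monic) (w : CZ n)
    (hfac : φ = (Polynomial.X - Polynomial.C w) * g)
    (hmult : zeonScalar n (g.eval (algebraMap ℂ (CZ n) (zeonScalar n w))) = 0) :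
    (∀ a : ℂ, a ≠ 0 → φ.eval (w + algebraMap ℂ (CZ n) a * zeonTop n) = 0) ∧
    {v : CZ n | φ.eval v = 0 ∧ zeonScalar n v = zeonScalar n w}.Infinite := by
  have := CZ_nontrivial n
  set T := zeonTop n with hT
  set σ := zeonScalar n with hσ
  -- scalar part of g.eval w is zero
  have hgw : σ (g.eval w) = 0 := by
    have h1 : σ (g.eval w) = g.eval₂ (σ : CZ n →+* ℂ) (σ w) :=
      (Polynomial.eval₂_hom (σ : CZ n →+* ℂ) w).symm
    have h2 : σ (g.eval (algebraMap ℂ (CZ n) (σ w))) = g.eval₂ (σ : CZ n →+* ℂ) (σ w) := by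
      have := (Polynomial.eval₂_hom (p := g) (σ : CZ n →+* ℂ) (algebraMap ℂ (CZ n) (σ w))).symm
      rwa [show (σ : CZ n →+* ℂ) (algebraMap ℂ (CZ n) (σ w)) = σ w from σ.commutes _] at this
    rw [h1, ← h2]
    exact hmult
  have hTgw : T * g.eval w = 0 := zeonTop_mul_nilpotent _ hgw
  have hTT : T * T = 0 := zeonTop_mul_nilpotent _ (zeonScalar_zeonTop hn)
  have hzero : ∀ a : ℂ, φ.eval (w + algebraMap ℂ (CZ n) a * T) = 0 := by
    intro a
    set c := algebraMap ℂ (CZ n) a * T with hc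
    have hcc : c * c = 0 := by
      rw [hc]
      calc algebraMap ℂ (CZ n) a * T * (algebraMap ℂ (CZ n) a * T)
          = algebraMap ℂ (CZ n) a * algebraMap ℂ (CZ n) a * (T * T) := by ring
        _ = 0 := by rw [hTT, mul_zero]
    have hcT : c * g.eval w = 0 := by
      rw [hc, mul_assoc, hTgw, mul_zero]
    obtain ⟨h, hh⟩ : (w + c) - w ∣ g.eval (w + c) - g.eval w :=
      Polynomial.sub_dvd_eval_sub _ _ g
    have hwc : (w + c) - w = c := by ring
    rw [hwc] at hh
    have hgv : g.eval (w + c) = g.eval w + c * h := by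
      have : g.eval (w + c) - g.eval w = c * h := hh
      linear_combination this
    rw [hfac, Polynomial.eval_mul, Polynomial.eval_sub, Polynomial.eval_X, Polynomial.eval_C,
      hwc, hgv]
    calc c * (g.eval w + c * h) = c * g.eval w + (c * c) * h := by ring
      _ = 0 := by rw [hcT, hcc]; ring
  refine ⟨fun a _ => hzero a, ?_⟩
  have hσT : σ T = 0 := zeonScalar_zeonTop hn
  have hmap : ∀ a : ℂ, (w + algebraMap ℂ (CZ n) a * T) ∈
      {v : CZ n | φ.eval v = 0 ∧ σ v = σ w} := by
    intro a
    refine ⟨hzero a, ?_⟩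
    rw [map_add, map_mul, hσT, mul_zero, add_zero]
  have hinj : Function.Injective (fun a : ℂ => w + algebraMap ℂ (CZ n) a * T) := by
    intro a b hab
    simp only at hab
    have h1 : algebraMap ℂ (CZ n) a * T = algebraMap ℂ (CZ n) b * T := add_left_cancel hab
    have h2 : algebraMap ℂ (CZ n) (a - b) * T = 0 := by
      rw [map_sub, sub_mul, h1, sub_self]
    by_contra hne
    have hc : (a - b) ≠ 0 := sub_ne_zero.mpr hne
    have hT0 : T = 0 := by
      have h3 := congrArg (fun x => algebraMap ℂ (CZ n) (a - b)⁻¹ * x) h2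
      simp only [mul_zero, ← mul_assoc, ← map_mul, inv_mul_cancel₀ hc, map_one, one_mul] at h3
      exact h3
    exact zeonTop_ne_zero n hT0
  have hrange : Set.Infinite (Set.range fun a : ℂ => w + algebraMap ℂ (CZ n) a * T) :=
    Set.infinite_range_of_injective hinj
  exact hrange.mono (Set.range_subset_iff.mpr hmap)
end

section
/- Let A ∈ Mat(m, ℂ𝔷ₙ) and suppose v₁, v₂ ∈ (ℂ𝔷ₙ)^m satisfy Av₁ = λ₁v₁ and Av₂ = λ₂v₂ with Cλ₁ ≠ Cλ₂, where v₁, v₂ each have at least one invertible component. Then v₁ and v₂ are linearly independent over ℂ𝔷ₙ: if α₁v₁ + α₂v₂ = 0 with α₁, α₂ ∈ ℂ𝔷ₙ, then α₁ = α₂ = 0. -/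
open MvPolynomial

lemma monomial_mem_zeonIdeal {n : ℕ} {d : Fin n →₀ ℕ} (c : ℂ) (hd : ∃ i, 2 ≤ d i) :
    monomial d c ∈ zeonIdeal n := by
  obtain ⟨i, hi⟩ := hd
  have hle : (Finsupp.single i 2) ≤ d := Finsupp.single_le_iff.mpr hi
  have hdecomp : Finsupp.single i 2 + (d - Finsupp.single i 2) = d :=
    add_tsub_cancel_of_le hle
  have : monomial d c = (X i ^ 2) * monomial (d - Finsupp.single i 2) c := by
    rw [X_pow_eq_monomial, monomial_mul, one_mul, hdecomp]
  rw [this]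
  exact Ideal.mul_mem_right _ _ (Ideal.subset_span ⟨i, rfl⟩)

lemma pow_support_degree {n : ℕ} {p : MvPolynomial (Fin n) ℂ} (hp : constantCoeff p = 0) :
    ∀ k, ∀ d ∈ (p ^ k).support, k ≤ d.sum fun _ e => e := by
  intro k
  induction k with
  | zero => intro d hd; exact Nat.zero_le _
  | succ k ih =>
    intro d hd
    rw [pow_succ] at hd
    obtain ⟨a, ha, b, hb, rfl⟩ := Finset.mem_add.mp (support_mul _ _ hd)
    have hb1 : 1 ≤ b.sum fun _ e => e := by
      rcases Nat.eq_zero_or_pos (b.sum fun _ e => e) with h | h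
      · exfalso
        have : b = 0 := by
          ext i
          by_contra hne
          have hi : i ∈ b.support := Finsupp.mem_support_iff.mpr hne
          have := Finset.sum_eq_zero_iff.mp h i hi
          exact hne this
        rw [this] at hb
        exact (Finsupp.mem_support_iff.mp hb) hp
      · exact h
    have := ih a ha
    have hsum : (a + b).sum (fun _ e => e) = (a.sum fun _ e => e) + b.sum fun _ e => e :=
      Finsupp.sum_add_index (by simp) (by simp)
    omega

lemma zeon_nilpotent {n : ℕ} (u : CZ n) (hu : zeonScalar n u = 0) : u ^ (n + 1) = 0 := by
  obtain ⟨p, rfl⟩ := Ideal.Quotient.mk_surjective u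
  have hc : constantCoeff p = 0 := by
    have : zeonScalar n (Ideal.Quotient.mk (zeonIdeal n) p) = aeval (fun _ : Fin n => (0 : ℂ)) p :=
      rfl
    rw [this] at hu
    have : (aeval (0 : Fin n → ℂ)) p = constantCoeff p := by
      rw [aeval_zero]; rfl
    rw [← this]
    exact hu
  have : (Ideal.Quotient.mk (zeonIdeal n) p) ^ (n + 1) =
      Ideal.Quotient.mk (zeonIdeal n) (p ^ (n + 1)) := by rw [map_pow]
  rw [this, Ideal.Quotient.eq_zero_iff_mem]
  nth_rewrite 1 [as_sum (p ^ (n + 1))]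
  refine Ideal.sum_mem _ fun d hd => monomial_mem_zeonIdeal _ ?_
  have hdeg := pow_support_degree hc (n + 1) d hd
  by_contra hcon
  push_neg at hcon
  have : (d.sum fun _ e => e) ≤ n := by
    calc (d.sum fun _ e => e) = ∑ i ∈ d.support, d i := rfl
    _ ≤ ∑ _i ∈ d.support, 1 := Finset.sum_le_sum fun i _ => Nat.lt_succ_iff.mp (hcon i)
    _ = d.support.card := by simp
    _ ≤ (Finset.univ : Finset (Fin n)).card := Finset.card_le_card (Finset.subset_univ _)
    _ = n := by simp
  omega

lemma zeon_isUnit {n : ℕ} (u : CZ n) (hu : zeonScalar n u ≠ 0) : IsUnit u := by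
  have hdecomp : u = zeonDual u + algebraMap ℂ (CZ n) (zeonScalar n u) := by
    rw [zeonDual]; ring
  have hnil : IsNilpotent (zeonDual u) := by
    refine ⟨n + 1, zeon_nilpotent _ ?_⟩
    rw [zeonDual, map_sub, AlgHom.commutes]
    simp
  have hunit : IsUnit (algebraMap ℂ (CZ n) (zeonScalar n u)) :=
    (isUnit_iff_ne_zero.mpr hu).map (algebraMap ℂ (CZ n))
  rw [hdecomp]
  exact hnil.isUnit_add_right_of_commute hunit (Commute.all _ _)

set_option maxHeartbeats 2000000 in
set_option synthInstance.maxHeartbeats 1000000 in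
/-- Eigenvectors (each with at least one invertible component) associated with zeon
eigenvalues having distinct scalar parts are linearly independent over `ℂ𝔷ₙ`. -/
theorem zeon_eigenvectors_linear_independent (n m : ℕ)
    (A : Matrix (Fin m) (Fin m) (CZ n)) (lam₁ lam₂ : CZ n) (v₁ v₂ : Fin m → CZ n)
    (h₁ : A.mulVec v₁ = lam₁ • v₁) (h₂ : A.mulVec v₂ = lam₂ • v₂)
    (hlam : zeonScalar n lam₁ ≠ zeonScalar n lam₂)
    (hv₁ : ∃ i, zeonScalar n (v₁ i) ≠ 0) (hv₂ : ∃ i, zeonScalar n (v₂ i) ≠ 0) :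
    ∀ α₁ α₂ : CZ n, α₁ • v₁ + α₂ • v₂ = 0 → α₁ = 0 ∧ α₂ = 0 := by
  intro α₁ α₂ hz
  obtain ⟨i₁, hi₁⟩ := hv₁
  obtain ⟨i₂, hi₂⟩ := hv₂
  have hu₁ : IsUnit (v₁ i₁) := zeon_isUnit _ hi₁
  have hu₂ : IsUnit (v₂ i₂) := zeon_isUnit _ hi₂
  have hu₂₁ : IsUnit (lam₂ - lam₁) := by
    apply zeon_isUnit
    rw [map_sub, sub_ne_zero]
    exact fun h => hlam h.symm
  -- pointwise versions of the hypotheses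
  have hz' : ∀ ℓ, α₁ * v₁ ℓ + α₂ * v₂ ℓ = 0 := fun ℓ => congrFun hz ℓ
  have h₁' : ∀ ℓ, ∑ j, A ℓ j * v₁ j = lam₁ * v₁ ℓ := fun ℓ => congrFun h₁ ℓ
  have h₂' : ∀ ℓ, ∑ j, A ℓ j * v₂ j = lam₂ * v₂ ℓ := fun ℓ => congrFun h₂ ℓ
  -- apply A to the relation, pointwise
  have e1 : ∀ ℓ, α₁ * (lam₁ * v₁ ℓ) + α₂ * (lam₂ * v₂ ℓ) = 0 := by
    intro ℓ
    rw [← h₁', ← h₂', Finset.mul_sum, Finset.mul_sum, ← Finset.sum_add_distrib]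
    have : ∀ j ∈ Finset.univ, α₁ * (A ℓ j * v₁ j) + α₂ * (A ℓ j * v₂ j)
        = A ℓ j * (α₁ * v₁ j + α₂ * v₂ j) := fun j _ => by ring
    rw [Finset.sum_congr rfl this]
    refine Finset.sum_eq_zero fun j _ => ?_
    rw [hz' j, mul_zero]
  have e3 : α₂ * (lam₂ - lam₁) * v₂ i₂ = 0 := by
    have h4 := e1 i₂
    have h5 := congrArg (fun x => lam₁ * x) (hz' i₂)
    simp only [mul_add, mul_zero] at h5
    have : α₂ * (lam₂ - lam₁) * v₂ i₂
        = (α₁ * (lam₁ * v₁ i₂) + α₂ * (lam₂ * v₂ i₂))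
          - (lam₁ * (α₁ * v₁ i₂) + lam₁ * (α₂ * v₂ i₂)) := by ring
    rw [this, h4, h5, sub_zero]
  have hα₂ : α₂ = 0 := by
    rw [mul_assoc] at e3
    rw [← (hu₂₁.mul hu₂).mul_left_eq_zero]
    exact e3
  have hα₁ : α₁ = 0 := by
    have := hz' i₁
    rw [hα₂, zero_mul, add_zero] at this
    rw [← hu₁.mul_left_eq_zero]
    exact this
  exact ⟨hα₁, hα₂⟩
end
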